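/- Let (Ω, Σ, μ) be a measure space with 0 < μ(Ω) < ∞, let f, g ∈ L²(Ω, 𝕜) (𝕜 = ℝ or ℂ), and let z, Z, t, T ∈ 𝕜 with Re(Z·conj(z)) > 0 and Re(T·conj(t)) > 0 be such that Re[(Z − f(s))·(conj(f(s)) − conj(z))] ≥ 0 and Re[(T − g(s))·(conj(g(s)) − conj(t))] ≥ 0 for μ-a.e. s ∈ Ω. Then |(1/μ(Ω))∫_Ω f(s)conj(g(s)) dμ − (1/μ(Ω))∫_Ω f(s) dμ · (1/μ(Ω))∫_Ω conj(g(s)) dμ| ≤ (1/4)·M(z,Z)·M(t,T)·|(1/μ(Ω))∫_Ω f(s) dμ · (1/μ(Ω))∫_Ω conj(g(s)) dμ|, where M(c,C) := [((|C| − |c|)² + 4(|C·conj(c)| − Re(C·conj(c))))/Re(C·conj(c))]^{1/2}. -/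

import Mathlib

/-!
Let `x`, `y`, `e` be the classes of `f`, `g` and `1` in `L²` of the normalized measure. The
covariance is `⟪y, x⟫ - ⟪e, x⟫ * ⟪y, e⟫ = ⟪y - ⟪e, y⟫ • e, x - ⟪e, x⟫ • e⟫`, so by
Cauchy–Schwarz it is at most the product of the distances of `x` and `y` to the line through `e`.
The hypothesis on `f` integrates to `0 ≤ re ⟪x - z • e, Z • e - x⟫`, which expands to
`‖x‖² ≤ (‖Z‖ + ‖z‖) * ‖⟪e, x⟫‖ - re (Z * conj z)`, and AM–GM turns this into
`‖x‖² - ‖⟪e, x⟫‖² ≤ M(z, Z)² / 4 * ‖⟪e, x⟫‖²`.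
-/

open MeasureTheory

/-- The constant `M(c, C)`. -/
noncomputable def grussM {𝕜 : Type*} [RCLike 𝕜] (c C : 𝕜) : ℝ :=
  Real.sqrt (((‖C‖ - ‖c‖) ^ 2 +
      4 * (‖C * starRingEnd 𝕜 c‖ - RCLike.re (C * starRingEnd 𝕜 c))) /
    RCLike.re (C * starRingEnd 𝕜 c))

open RCLike ComplexConjugate

section Scalar

variable {𝕜 : Type*} [RCLike 𝕜]

lemma grussM_nonneg (c C : 𝕜) : 0 ≤ grussM c C := Real.sqrt_nonneg _

lemma re_mul_conj_mul_grussM_sq {c C : 𝕜} (h : 0 < re (C * conj c)) :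
    re (C * conj c) * grussM c C ^ 2 = (‖C‖ + ‖c‖) ^ 2 - 4 * re (C * conj c) := by
  have hnum : 0 ≤ (‖C‖ - ‖c‖) ^ 2 + 4 * (‖C * conj c‖ - re (C * conj c)) := by
    nlinarith [re_le_norm (C * conj c), sq_nonneg (‖C‖ - ‖c‖)]
  rw [grussM, Real.sq_sqrt (div_nonneg hnum h.le), mul_div_cancel₀ _ h.ne', norm_mul, norm_conj]
  ring

end Scalar

section InnerProductSpace

variable {𝕜 E : Type*} [RCLike 𝕜] [SeminormedAddCommGroup E] [InnerProductSpace 𝕜 E] {e : E}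

local notation "⟪" x ", " y "⟫" => inner 𝕜 x y

lemma inner_sub_inner_smul_sub_inner_smul (he : ‖e‖ = 1) (x y : E) :
    ⟪y - ⟪e, y⟫ • e, x - ⟪e, x⟫ • e⟫ = ⟪y, x⟫ - ⟪e, x⟫ * ⟪y, e⟫ := by
  simp only [inner_sub_left, inner_sub_right, inner_smul_left, inner_smul_right,
    inner_self_eq_norm_sq_to_K, he, inner_conj_symm]
  push_cast
  ring

lemma norm_sub_inner_smul_sq (he : ‖e‖ = 1) (x : E) :
    ‖x - ⟪e, x⟫ • e‖ ^ 2 = ‖x‖ ^ 2 - ‖⟪e, x⟫‖ ^ 2 := by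
  rw [norm_sub_sq (𝕜 := 𝕜), inner_smul_right, ← inner_conj_symm x e, RCLike.mul_conj, norm_smul,
    he]
  norm_cast
  ring

lemma norm_sq_sub_norm_inner_sq_le {φ Φ : 𝕜} {x : E} (he : ‖e‖ = 1)
    (hφΦ : 0 < re (Φ * conj φ)) (hx : 0 ≤ re ⟪x - φ • e, Φ • e - x⟫) :
    ‖x‖ ^ 2 - ‖⟪e, x⟫‖ ^ 2 ≤ grussM φ Φ ^ 2 / 4 * ‖⟪e, x⟫‖ ^ 2 := by
  have hexpand : re ⟪x - φ • e, Φ • e - x⟫ =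
      re (Φ * conj ⟪e, x⟫) + re (conj φ * ⟪e, x⟫) - re (Φ * conj φ) - ‖x‖ ^ 2 := by
    simp only [inner_sub_left, inner_sub_right, inner_smul_left, inner_smul_right,
      inner_self_eq_norm_sq_to_K, he, ← inner_conj_symm x e, ← ofReal_pow, mul_sub, map_sub,
      ofReal_re, ofReal_one, one_pow, mul_one]
    ring
  set a := ⟪e, x⟫
  have hre_le : re (Φ * conj a) + re (conj φ * a) ≤ (‖Φ‖ + ‖φ‖) * ‖a‖ := by
    have h₁ := re_le_norm (Φ * conj a)
    have h₂ := re_le_norm (conj φ * a)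
    rw [norm_mul, norm_conj] at h₁ h₂
    linarith
  have hM := re_mul_conj_mul_grussM_sq hφΦ
  -- with `p = re (Φ * conj φ)`, `b = ‖Φ‖ + ‖φ‖`, `r = ‖a‖`, `hM` says `p * M² = b² - 4p`, so
  -- `p * (M² / 4 * r² - (b * r - p - r²)) = (b * r / 2 - p)²`
  nlinarith [sq_nonneg ((‖Φ‖ + ‖φ‖) * ‖a‖ - 2 * re (Φ * conj φ))]

lemma norm_sub_inner_smul_le {φ Φ : 𝕜} {x : E} (he : ‖e‖ = 1)
    (hφΦ : 0 < re (Φ * conj φ)) (hx : 0 ≤ re ⟪x - φ • e, Φ • e - x⟫) :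
    ‖x - ⟪e, x⟫ • e‖ ≤ grussM φ Φ / 2 * ‖⟪e, x⟫‖ := by
  have hM := grussM_nonneg φ Φ
  rw [← pow_le_pow_iff_left₀ (norm_nonneg _) (by positivity) two_ne_zero,
    norm_sub_inner_smul_sq he, mul_pow, div_pow]
  linarith [norm_sq_sub_norm_inner_sq_le he hφΦ hx]

theorem norm_inner_sub_inner_mul_inner_le {φ Φ γ Γ : 𝕜} {x y : E} (he : ‖e‖ = 1)
    (hφΦ : 0 < re (Φ * conj φ)) (hγΓ : 0 < re (Γ * conj γ))
    (hx : 0 ≤ re ⟪x - φ • e, Φ • e - x⟫) (hy : 0 ≤ re ⟪y - γ • e, Γ • e - y⟫) :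
    ‖⟪y, x⟫ - ⟪e, x⟫ * ⟪y, e⟫‖ ≤
      1 / 4 * grussM φ Φ * grussM γ Γ * ‖⟪e, x⟫ * ⟪y, e⟫‖ := by
  have hM := grussM_nonneg γ Γ
  calc ‖⟪y, x⟫ - ⟪e, x⟫ * ⟪y, e⟫‖ = ‖⟪y - ⟪e, y⟫ • e, x - ⟪e, x⟫ • e⟫‖ := by
        rw [inner_sub_inner_smul_sub_inner_smul he]
    _ ≤ ‖y - ⟪e, y⟫ • e‖ * ‖x - ⟪e, x⟫ • e‖ := norm_inner_le_norm _ _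
    _ ≤ (grussM γ Γ / 2 * ‖⟪e, y⟫‖) * (grussM φ Φ / 2 * ‖⟪e, x⟫‖) :=
        mul_le_mul (norm_sub_inner_smul_le he hγΓ hy) (norm_sub_inner_smul_le he hφΦ hx)
          (norm_nonneg _) (by positivity)
    _ = 1 / 4 * grussM φ Φ * grussM γ Γ * ‖⟪e, x⟫ * ⟪y, e⟫‖ := by
        rw [norm_mul, norm_inner_symm y e]
        ring

end InnerProductSpace

section L2

variable {Ω 𝕜 : Type*} [MeasurableSpace Ω] [RCLike 𝕜] {μ : Measure Ω}

local notation "⟪" x ", " y "⟫" => inner 𝕜 x y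

lemma L2.inner_eq_integral_mul_conj {u v : Lp 𝕜 2 μ} {f g : Ω → 𝕜}
    (hu : u =ᵐ[μ] f) (hv : v =ᵐ[μ] g) : ⟪u, v⟫ = ∫ s, g s * conj (f s) ∂μ := by
  rw [L2.inner_def]
  refine integral_congr_ae ?_
  filter_upwards [hu, hv] with s hus hvs
  rw [inner_apply, hus, hvs]

lemma L2.re_inner_nonneg_of_ae {u v : Lp 𝕜 2 μ} {f g : Ω → 𝕜}
    (hu : u =ᵐ[μ] f) (hv : v =ᵐ[μ] g) (h : ∀ᵐ s ∂μ, 0 ≤ re (g s * conj (f s))) :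
    0 ≤ re ⟪u, v⟫ := by
  rw [L2.inner_def, ← integral_re (L2.integrable_inner u v)]
  refine integral_nonneg_of_ae ?_
  filter_upwards [hu, hv, h] with s hus hvs hs
  rwa [inner_apply, hus, hvs]

theorem norm_integral_mul_conj_sub_mul_integral_le [IsProbabilityMeasure μ] {f g : Ω → 𝕜}
    (hf : MemLp f 2 μ) (hg : MemLp g 2 μ) {z Z t T : 𝕜}
    (hzZ : 0 < re (Z * conj z)) (htT : 0 < re (T * conj t))
    (h1 : ∀ᵐ s ∂μ, 0 ≤ re ((Z - f s) * (conj (f s) - conj z)))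
    (h2 : ∀ᵐ s ∂μ, 0 ≤ re ((T - g s) * (conj (g s) - conj t))) :
    ‖∫ s, f s * conj (g s) ∂μ - (∫ s, f s ∂μ) * ∫ s, conj (g s) ∂μ‖ ≤
      1 / 4 * grussM z Z * grussM t T * ‖(∫ s, f s ∂μ) * ∫ s, conj (g s) ∂μ‖ := by
  set e : Lp 𝕜 2 μ := Lp.const 2 μ 1
  have he : ‖e‖ = 1 := by simp [e, Lp.norm_const]
  have he1 : ⇑e =ᵐ[μ] fun _ => (1 : 𝕜) := Lp.coeFn_const 2 μ 1
  have hce (c : 𝕜) : ⇑(c • e) =ᵐ[μ] fun _ => c := by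
    filter_upwards [Lp.coeFn_smul c e, he1] with s h₁ h₂
    simp [h₁, h₂]
  have hF := hf.coeFn_toLp
  have hG := hg.coeFn_toLp
  have hx : 0 ≤ re ⟪hf.toLp f - z • e, Z • e - hf.toLp f⟫ :=
    L2.re_inner_nonneg_of_ae ((Lp.coeFn_sub _ _).trans (hF.sub (hce z)))
      ((Lp.coeFn_sub _ _).trans ((hce Z).sub hF)) (by simpa using h1)
  have hy : 0 ≤ re ⟪hg.toLp g - t • e, T • e - hg.toLp g⟫ :=
    L2.re_inner_nonneg_of_ae ((Lp.coeFn_sub _ _).trans (hG.sub (hce t)))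
      ((Lp.coeFn_sub _ _).trans ((hce T).sub hG)) (by simpa using h2)
  have hGF : ⟪hg.toLp g, hf.toLp f⟫ = ∫ s, f s * conj (g s) ∂μ :=
    L2.inner_eq_integral_mul_conj hG hF
  have heF : ⟪e, hf.toLp f⟫ = ∫ s, f s ∂μ := by
    simp [L2.inner_eq_integral_mul_conj he1 hF]
  have hGe : ⟪hg.toLp g, e⟫ = ∫ s, conj (g s) ∂μ := by
    simp [L2.inner_eq_integral_mul_conj hG he1]
  simpa only [hGF, heF, hGe] using norm_inner_sub_inner_mul_inner_le he hzZ htT hx hy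

end L2

/-- **A Grüss type inequality for integral means** (Corollary 5). -/
theorem gruss_integral_mean {Ω 𝕜 : Type*} [MeasurableSpace Ω] [RCLike 𝕜]
    (μ : Measure Ω) (hμ0 : 0 < μ Set.univ) (hμ : μ Set.univ < ⊤)
    (f g : Ω → 𝕜) (hf : MemLp f 2 μ) (hg : MemLp g 2 μ)
    (z Z t T : 𝕜)
    (hzZ : 0 < RCLike.re (Z * starRingEnd 𝕜 z))
    (htT : 0 < RCLike.re (T * starRingEnd 𝕜 t))
    (h1 : ∀ᵐ s ∂μ, 0 ≤ RCLike.re ((Z - f s) * (starRingEnd 𝕜 (f s) - starRingEnd 𝕜 z)))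
    (h2 : ∀ᵐ s ∂μ, 0 ≤ RCLike.re ((T - g s) * (starRingEnd 𝕜 (g s) - starRingEnd 𝕜 t))) :
    ‖((1 / (μ Set.univ).toReal) • ∫ s, f s * starRingEnd 𝕜 (g s) ∂μ) -
        ((1 / (μ Set.univ).toReal) • ∫ s, f s ∂μ) *
          ((1 / (μ Set.univ).toReal) • ∫ s, starRingEnd 𝕜 (g s) ∂μ)‖ ≤
      (1 / 4 : ℝ) * grussM z Z * grussM t T *
        ‖((1 / (μ Set.univ).toReal) • ∫ s, f s ∂μ) *
          ((1 / (μ Set.univ).toReal) • ∫ s, starRingEnd 𝕜 (g s) ∂μ)‖ := by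
  have : IsFiniteMeasure μ := ⟨hμ⟩
  have : NeZero μ := ⟨Measure.measure_univ_pos.mp hμ0⟩
  have hmean (h : Ω → 𝕜) :
      (1 / (μ Set.univ).toReal) • ∫ s, h s ∂μ = ∫ s, h s ∂((μ Set.univ)⁻¹ • μ) := by
    rw [integral_smul_measure, ENNReal.toReal_inv, one_div]
  have hc : (μ Set.univ)⁻¹ ≠ ⊤ := ENNReal.inv_ne_top.mpr hμ0.ne'
  simp only [hmean]
  exact norm_integral_mul_conj_sub_mul_integral_le (hf.smul_measure hc) (hg.smul_measure hc)
    hzZ htT (Measure.ae_smul_measure h1 _) (Measure.ae_smul_measure h2 _)
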